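/- Let c be a codeword of C_BC[2^{a+1}λ, λ, ω, ρ] over a field of characteristic 2, written as 2^{a+2}λ blocks c_1,…,c_{2^{a+2}λ}. Then the folded vector y with blocks y_j = c_j + c_{j + 2^{a+1}λ} (j ∈ [2^{a+1}λ]) is a codeword of C_BC[2^a λ, λ, ω, ρ] (with the same local parity check matrices W_1,…,W_λ). -/

import Mathlib

open Fin.NatCast

/-- Membership in the block circulant code `C_BC[M, λ, ω, ρ]` in its evaluation-code
form: data blocks `d i : Fin ω → F`, parity blocks `p i : Fin ρ → F`; for every `i` the
`i`-th local codeword (data blocks `d i, …, d (i+λ-1)` and parity block `p i`) is the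
evaluation of a message polynomial of degree `≤ λω - 1` at the evaluation points
`αo`/`αe`, with the point sets shared cyclically (with period `λ`) between consecutive
local codes. -/
def inBC {F : Type*} [Field F] (M lam ω ρ : ℕ) [NeZero M] [NeZero lam]
    (αo : Fin lam → Fin ω → F) (αe : Fin lam → Fin ρ → F)
    (d : Fin M → Fin ω → F) (p : Fin M → Fin ρ → F) : Prop :=
  ∀ i : Fin M, ∃ m : Polynomial F, m.natDegree ≤ lam * ω - 1 ∧
    (∀ (j : Fin lam) (s : Fin ω),
      d (i + ((j : ℕ) : Fin M)) s = m.eval (αo (((i : ℕ) : Fin lam) + j) s)) ∧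
    (∀ s : Fin ρ, p i s = m.eval (αe ((i : ℕ) : Fin lam) s))

/-!
Folding sums, for each residue class modulo `M'`, the blocks of `c` in that class. Because
`λ ∣ M'`, all blocks of one class lie over the same local evaluation points, so the `i`-th local
codeword of the fold is the evaluation of the sum of the message polynomials of the local
codewords of `c` at the lifts of `i`, which still has degree at most `λω - 1`. For `M = 2M'`
each class consists of exactly the two blocks `j` and `j + M'`.
-/

namespace Fin

variable {M M' : ℕ} [NeZero M] [NeZero M']

theorem natCast_val_natCast_of_dvd (h : M' ∣ M) (n : ℕ) :
    (((n : Fin M) : ℕ) : Fin M') = (n : Fin M') :=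
  Fin.ext <| by simp only [Fin.val_natCast, Nat.mod_mod_of_dvd _ h]

theorem natCast_val_add_of_dvd (h : M' ∣ M) (x y : Fin M) :
    (((x + y : Fin M) : ℕ) : Fin M') = ((x : ℕ) : Fin M') + ((y : ℕ) : Fin M') := by
  rw [← Nat.cast_add, ← natCast_val_natCast_of_dvd h (x + y : ℕ), Nat.cast_add,
    Fin.cast_val_eq_self, Fin.cast_val_eq_self]

end Fin

section Folding

variable {M M' : ℕ} [NeZero M] [NeZero M']

def blockFiber (M : ℕ) [NeZero M] (M' : ℕ) [NeZero M'] (k : Fin M') : Finset (Fin M) :=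
  Finset.univ.filter fun x => ((x : ℕ) : Fin M') = k

theorem mem_blockFiber {x : Fin M} {k : Fin M'} :
    x ∈ blockFiber M M' k ↔ ((x : ℕ) : Fin M') = k := by
  simp only [blockFiber, Finset.mem_filter, Finset.mem_univ, true_and]

theorem blockFiber_of_eq_two_mul (h : M = 2 * M') (k : Fin M') :
    blockFiber M M' k = {((k : ℕ) : Fin M), (((k : ℕ) + M' : ℕ) : Fin M)} := by
  have hk := k.isLt
  ext x
  have hx := x.isLt
  simp only [mem_blockFiber, Finset.mem_insert, Finset.mem_singleton, Fin.ext_iff,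
    Fin.val_natCast, Nat.mod_eq_of_lt (show (k : ℕ) < M by omega),
    Nat.mod_eq_of_lt (show (k : ℕ) + M' < M by omega)]
  rcases lt_or_ge (x : ℕ) M' with hlt | hge
  · rw [Nat.mod_eq_of_lt hlt]; omega
  · rw [Nat.mod_eq_sub_mod hge, Nat.mod_eq_of_lt (by omega)]; omega

variable {X : Type*} [AddCommMonoid X]

def foldBlocks (M' : ℕ) [NeZero M'] (v : Fin M → X) (k : Fin M') : X :=
  ∑ x ∈ blockFiber M M' k, v x

theorem foldBlocks_add_natCast (h : M' ∣ M) (v : Fin M → X) (i : Fin M') (j : ℕ) :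
    foldBlocks M' v (i + (j : Fin M')) = ∑ x ∈ blockFiber M M' i, v (x + j) := by
  rw [foldBlocks, blockFiber, blockFiber, Finset.sum_filter, Finset.sum_filter,
    ← Equiv.sum_comp (Equiv.addRight (j : Fin M))]
  refine Finset.sum_congr rfl fun x _ => ?_
  simp only [Equiv.coe_addRight, Fin.natCast_val_add_of_dvd h,
    Fin.natCast_val_natCast_of_dvd h, add_left_inj]

theorem foldBlocks_of_eq_two_mul (h : M = 2 * M') (v : Fin M → X) :
    foldBlocks M' v = fun k : Fin M' => v (k : ℕ) + v ((k : ℕ) + M' : ℕ) := by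
  funext k
  have hk := k.isLt
  rw [foldBlocks, blockFiber_of_eq_two_mul h, Finset.sum_pair]
  rw [Ne, Fin.ext_iff, Fin.val_cast_of_lt (show (k : ℕ) < M by omega),
    Fin.val_cast_of_lt (show (k : ℕ) + M' < M by omega)]
  exact (Nat.lt_add_of_pos_right (Nat.pos_of_neZero M')).ne

end Folding

theorem inBC_foldBlocks {F : Type*} [Field F] {M M' lam ω ρ : ℕ} [NeZero M] [NeZero M']
    [NeZero lam] (hM : M' ∣ M) (hlam : lam ∣ M')
    {αo : Fin lam → Fin ω → F} {αe : Fin lam → Fin ρ → F}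
    {d : Fin M → Fin ω → F} {p : Fin M → Fin ρ → F} (hc : inBC M lam ω ρ αo αe d p) :
    inBC M' lam ω ρ αo αe (foldBlocks M' d) (foldBlocks M' p) := by
  intro i
  choose m hdeg hd hp using hc
  have hphase : ∀ x ∈ blockFiber M M' i, ((x : ℕ) : Fin lam) = ((i : ℕ) : Fin lam) :=
    fun x hx => by rw [← mem_blockFiber.1 hx, Fin.natCast_val_natCast_of_dvd hlam]
  refine ⟨∑ x ∈ blockFiber M M' i, m x,
    Polynomial.natDegree_sum_le_of_forall_le _ _ fun x _ => hdeg x, fun j s => ?_, fun s => ?_⟩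
  · rw [foldBlocks_add_natCast hM, Finset.sum_apply, Polynomial.eval_finsetSum]
    exact Finset.sum_congr rfl fun x hx => by rw [hd x j s, hphase x hx]
  · rw [foldBlocks, Finset.sum_apply, Polynomial.eval_finsetSum]
    exact Finset.sum_congr rfl fun x hx => by rw [hp x s, hphase x hx]

theorem stmt19_general {F : Type*} [Field F] {a lam ω ρ : ℕ} [NeZero lam]
    (M M' : ℕ) [NeZero M] [NeZero M']
    (hM : M = 2 ^ (a + 1) * lam) (hM' : M' = 2 ^ a * lam)
    (αo : Fin lam → Fin ω → F) (αe : Fin lam → Fin ρ → F)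
    (d : Fin M → Fin ω → F) (p : Fin M → Fin ρ → F)
    (hc : inBC M lam ω ρ αo αe d p)
    (yd : Fin M' → Fin ω → F) (yp : Fin M' → Fin ρ → F)
    (hyd : ∀ j : Fin M', yd j = d ((j : ℕ) : Fin M) + d ((((j : ℕ) + M' : ℕ)) : Fin M))
    (hyp : ∀ j : Fin M', yp j = p ((j : ℕ) : Fin M) + p ((((j : ℕ) + M' : ℕ)) : Fin M)) :
    inBC M' lam ω ρ αo αe yd yp := by
  have hhalf : M = 2 * M' := by rw [hM, hM']; ring
  obtain rfl : yd = foldBlocks M' d := (funext hyd).trans (foldBlocks_of_eq_two_mul hhalf d).symm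
  obtain rfl : yp = foldBlocks M' p := (funext hyp).trans (foldBlocks_of_eq_two_mul hhalf p).symm
  exact inBC_foldBlocks ⟨2, by rw [hhalf, mul_comm]⟩ ⟨2 ^ a, by rw [hM', mul_comm]⟩ hc

/-- Let `c = (d, p)` be a codeword of `C_BC[2^{a+1}λ, λ, ω, ρ]` over a
field of characteristic 2. Then the folded vector `y` with blocks
`y_j = c_j + c_{j + 2^a λ·(blocks)}` (adding blocks half a period apart) is a codeword of
`C_BC[2^a λ, λ, ω, ρ]` with the same local parity checks (the same evaluation points). -/
theorem stmt19 {F : Type*} [Field F] [CharP F 2] {a lam ω ρ : ℕ} [NeZero lam]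
    (M M' : ℕ) [NeZero M] [NeZero M']
    (hM : M = 2 ^ (a + 1) * lam) (hM' : M' = 2 ^ a * lam)
    (αo : Fin lam → Fin ω → F) (αe : Fin lam → Fin ρ → F)
    (d : Fin M → Fin ω → F) (p : Fin M → Fin ρ → F)
    (hc : inBC M lam ω ρ αo αe d p)
    (yd : Fin M' → Fin ω → F) (yp : Fin M' → Fin ρ → F)
    (hyd : ∀ j : Fin M', yd j = d ((j : ℕ) : Fin M) + d ((((j : ℕ) + M' : ℕ)) : Fin M))
    (hyp : ∀ j : Fin M', yp j = p ((j : ℕ) : Fin M) + p ((((j : ℕ) + M' : ℕ)) : Fin M)) :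
    inBC M' lam ω ρ αo αe yd yp :=
  stmt19_general M M' hM hM' αo αe d p hc yd yp hyd hyp
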